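/- Let μ ≥ 1 and let N be an even integer with N > 2μ. Then ‖T_N(μ)⁻¹‖₁ < ‖(T_N(μ)⁻¹)_{rows 1:2⌊μ⌋}‖₁ + 1/(2μ), where (T_N(μ)⁻¹)_{rows 1:2⌊μ⌋} denotes the submatrix of T_N(μ)⁻¹ consisting of its first 2⌊μ⌋ rows (and all N columns). The bound is uniform with respect to the even approximation dimension N. -/

import Mathlib

/-- The `N × N` tridiagonal matrix `T_N(μ)` with diagonal `2, 4, …, 2N`, subdiagonal `μ`
and superdiagonal `-μ` (0-based indexing). -/
noncomputable def Tmat (N : ℕ) (μ : ℝ) : Matrix (Fin N) (Fin N) ℝ :=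
  Matrix.of fun i j =>
    if (i : ℕ) = (j : ℕ) then 2 * (((i : ℕ) : ℝ) + 1)
    else if (i : ℕ) = (j : ℕ) + 1 then μ
    else if (j : ℕ) = (i : ℕ) + 1 then -μ
    else 0

/-- The matrix norm induced by the `‖·‖₁` vector norm: the maximum over columns of the
sum of absolute values of the entries of the column. -/
noncomputable def mat1norm {m n : ℕ} (A : Matrix (Fin m) (Fin n) ℝ) : ℝ :=
  ⨆ l : Fin n, ∑ i : Fin m, |A i l|

/-!
Write `d i = 2 (i + 1)` and `x = T⁻¹ e_l`. Above the diagonal `x i = s (i+1) * x (i+1)` and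
below it `x (i+1) = -t (i+1) * x i`, where `s` and `t` are the continued fractions produced by
Gaussian elimination from the top and from the bottom; `0 ≤ s (i+1), t i ≤ μ / d i`, and the
diagonal entry is `1 / (d l + μ s l + μ t (l+1)) ≤ 1 / d l`. For `k = 2⌊μ⌋` we have
`2μ < k + 2`, so from row `k` on these ratios are at most `1/3` above and `1/4` below the
diagonal. Hence the rows `≥ k` of column `l` sum to at most `(1/2 + 4/3) / d l` if `l > k`, and
to at most `4/3` times the entry in row `k` if `l ≤ k`. In the latter case the sign symmetry
`Tᵀ = D T D`, `D = diag ((-1)^i)`, turns that entry into the entry in row `l` of column `k`,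
which is at most the diagonal entry `1 / d k` because `s i * s (i+1) ≤ 1`. Both bounds are
below `1 / (2μ)`.
-/

open Finset
open scoped Matrix

lemma Matrix.abs_inv_apply_comm {n : Type*} [Fintype n] [DecidableEq n] (A : Matrix n n ℝ)
    (s : n → ℝ) (hs : ∀ i, s i * s i = 1) (hA : ∀ i j, A j i = s i * s j * A i j)
    (i j : n) :
    |A⁻¹ i j| = |A⁻¹ j i| := by
  set D := Matrix.diagonal s
  have hDD : D * D = 1 := by
    rw [Matrix.diagonal_mul_diagonal, ← Matrix.diagonal_one]
    exact congrArg Matrix.diagonal (funext hs)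
  have hAt : Aᵀ = D * A * D := by
    ext i j
    simp only [Matrix.transpose_apply, D, Matrix.mul_diagonal, Matrix.diagonal_mul, hA i j]
    ring
  have hinv : (A⁻¹)ᵀ = D * A⁻¹ * D := by
    rw [Matrix.transpose_nonsing_inv, hAt, Matrix.mul_inv_rev, Matrix.mul_inv_rev,
      Matrix.inv_eq_left_inv hDD, mul_assoc]
  have hsi : ∀ i, |s i| = 1 := fun i => by
    rcases mul_self_eq_one_iff.1 (hs i) with h | h <;> simp [h]
  have := congrFun (congrFun hinv j) i
  simp only [Matrix.transpose_apply, D, Matrix.mul_diagonal, Matrix.diagonal_mul] at this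
  rw [this, abs_mul, abs_mul, hsi, hsi, one_mul, mul_one]

lemma sum_Ico_succ_add (f : ℕ → ℝ) {a b : ℕ} (hab : a ≤ b) :
    ∑ i ∈ Ico a b, f (i + 1) + f a = ∑ i ∈ Ico a b, f i + f b := by
  rw [sum_Ico_add' f a b 1, ← sum_Ico_succ_top hab,
    sum_eq_sum_Ico_succ_bot (by omega : a < b + 1), add_comm]

lemma one_sub_mul_sum_Ico_le_of_succ_le {f : ℕ → ℝ} {q : ℝ} {a b : ℕ} (hab : a ≤ b)
    (hf : ∀ i ∈ Ico a b, f (i + 1) ≤ q * f i) (hb : 0 ≤ f b) :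
    (1 - q) * ∑ i ∈ Ico a b, f i ≤ f a := by
  have h := sum_le_sum hf
  rw [← mul_sum] at h
  linarith [sum_Ico_succ_add f hab]

lemma one_sub_mul_sum_Ico_le_of_le_succ {f : ℕ → ℝ} {q : ℝ} {a b : ℕ} (hq : 0 ≤ q)
    (hab : a ≤ b) (hf : ∀ i ∈ Ico a b, f i ≤ q * f (i + 1)) (ha : 0 ≤ f a) :
    (1 - q) * ∑ i ∈ Ico a b, f i ≤ q * f b := by
  have h := sum_le_sum hf
  rw [← mul_sum] at h
  nlinarith [sum_Ico_succ_add f hab]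

lemma mat1norm_lt_add {m m' n : ℕ} [NeZero n] {A : Matrix (Fin m) (Fin n) ℝ}
    {B : Matrix (Fin m') (Fin n) ℝ} {ε : ℝ} (h : ∀ l, ∑ i, |A i l| < ∑ i, |B i l| + ε) :
    mat1norm A < mat1norm B + ε := by
  obtain ⟨l, hl⟩ := exists_eq_ciSup_of_finite (f := fun l => ∑ i, |A i l|)
  rw [mat1norm, ← hl]
  exact (h l).trans_le (by gcongr; exact le_ciSup (Finite.bddAbove_range fun l => ∑ i, |B i l|) l)

noncomputable section

def Tdiag (i : ℕ) : ℝ := 2 * ((i : ℝ) + 1)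

lemma Tdiag_pos (i : ℕ) : 0 < Tdiag i := by unfold Tdiag; positivity

lemma Tdiag_mono : Monotone Tdiag := fun i j h => by
  unfold Tdiag; gcongr

-- `fwdRatio μ 0 = 0` and `bwdRatio μ N i = 0` for `i ≥ N` encode the first and last rows.
def fwdRatio (μ : ℝ) : ℕ → ℝ
  | 0 => 0
  | i + 1 => μ / (Tdiag i + μ * fwdRatio μ i)

def bwdRatio (μ : ℝ) (N i : ℕ) : ℝ :=
  if i < N then μ / (Tdiag i + μ * bwdRatio μ N (i + 1)) else 0
termination_by N - i

def pivot (μ : ℝ) (N l : ℕ) : ℝ :=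
  (Tdiag l + μ * fwdRatio μ l + μ * bwdRatio μ N (l + 1))⁻¹

-- One of the two products is empty, depending on the side of the diagonal `i` lies on.
def invCol (μ : ℝ) (N l i : ℕ) : ℝ :=
  pivot μ N l * (∏ j ∈ Ico i l, fwdRatio μ (j + 1)) *
    ∏ j ∈ Ico l i, -bwdRatio μ N (j + 1)

def Tinv (N : ℕ) (μ : ℝ) : Matrix (Fin N) (Fin N) ℝ :=
  Matrix.of fun i l => invCol μ N l i

end

section Ratios

variable {μ : ℝ} {N : ℕ}

lemma fwdRatio_nonneg (hμ : 0 ≤ μ) : ∀ i, 0 ≤ fwdRatio μ i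
  | 0 => le_rfl
  | i + 1 => by
    have := fwdRatio_nonneg hμ i
    have := Tdiag_pos i
    simp only [fwdRatio]; positivity

lemma fwdRatio_succ_le (hμ : 0 ≤ μ) (i : ℕ) : fwdRatio μ (i + 1) ≤ μ / Tdiag i :=
  div_le_div_of_nonneg_left hμ (Tdiag_pos i)
    (le_add_of_nonneg_right (mul_nonneg hμ (fwdRatio_nonneg hμ i)))

lemma fwdRatio_succ_mul (hμ : 0 ≤ μ) (i : ℕ) :
    fwdRatio μ (i + 1) * (Tdiag i + μ * fwdRatio μ i) = μ :=
  div_mul_cancel₀ μ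
    (add_pos_of_pos_of_nonneg (Tdiag_pos i) (mul_nonneg hμ (fwdRatio_nonneg hμ i))).ne'

lemma fwdRatio_mul_fwdRatio_succ_le_one (hμ : 0 < μ) (i : ℕ) :
    fwdRatio μ i * fwdRatio μ (i + 1) ≤ 1 := by
  have h := fwdRatio_succ_mul hμ.le i
  have := mul_nonneg (fwdRatio_nonneg hμ.le (i + 1)) (Tdiag_pos i).le
  nlinarith

lemma bwdRatio_of_lt {i : ℕ} (hi : i < N) :
    bwdRatio μ N i = μ / (Tdiag i + μ * bwdRatio μ N (i + 1)) := by
  rw [bwdRatio, if_pos hi]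

lemma bwdRatio_of_le {i : ℕ} (hi : N ≤ i) : bwdRatio μ N i = 0 := by
  rw [bwdRatio, if_neg (not_lt.2 hi)]

lemma bwdRatio_nonneg (hμ : 0 ≤ μ) (i : ℕ) : 0 ≤ bwdRatio μ N i := by
  induction h : N - i generalizing i with
  | zero => rw [bwdRatio_of_le (by omega)]
  | succ r ih =>
    have := ih (i + 1) (by omega)
    have := Tdiag_pos i
    rw [bwdRatio_of_lt (by omega)]; positivity

lemma bwdRatio_le (hμ : 0 ≤ μ) (i : ℕ) : bwdRatio μ N i ≤ μ / Tdiag i := by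
  rcases lt_or_ge i N with hi | hi
  · rw [bwdRatio_of_lt hi]
    exact div_le_div_of_nonneg_left hμ (Tdiag_pos i)
      (le_add_of_nonneg_right (mul_nonneg hμ (bwdRatio_nonneg hμ _)))
  · rw [bwdRatio_of_le hi]; exact div_nonneg hμ (Tdiag_pos i).le

lemma bwdRatio_mul (hμ : 0 ≤ μ) {i : ℕ} (hi : i < N) :
    bwdRatio μ N i * (Tdiag i + μ * bwdRatio μ N (i + 1)) = μ := by
  rw [bwdRatio_of_lt hi]
  exact div_mul_cancel₀ μ
    (add_pos_of_pos_of_nonneg (Tdiag_pos i) (mul_nonneg hμ (bwdRatio_nonneg hμ _))).ne'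

lemma pivot_pos (hμ : 0 ≤ μ) (l : ℕ) : 0 < pivot μ N l := by
  have := fwdRatio_nonneg hμ l
  have := bwdRatio_nonneg (N := N) hμ (l + 1)
  have := Tdiag_pos l
  unfold pivot; positivity

lemma pivot_mul_Tdiag_le_one (hμ : 0 ≤ μ) (l : ℕ) : pivot μ N l * Tdiag l ≤ 1 := by
  have := mul_nonneg hμ (fwdRatio_nonneg hμ l)
  have := mul_nonneg hμ (bwdRatio_nonneg (N := N) hμ (l + 1))
  rw [pivot, inv_mul_le_iff₀ (by linarith [Tdiag_pos l])]
  linarith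

end Ratios

section Column

variable {μ : ℝ} {N l : ℕ}

lemma invCol_self : invCol μ N l l = pivot μ N l := by simp [invCol]

lemma invCol_of_lt {i : ℕ} (h : i < l) :
    invCol μ N l i = fwdRatio μ (i + 1) * invCol μ N l (i + 1) := by
  simp only [invCol, Ico_eq_empty_of_le h.le, Ico_eq_empty_of_le (Nat.succ_le_of_lt h),
    prod_eq_prod_Ico_succ_bot h]
  ring

lemma invCol_succ_of_le {i : ℕ} (h : l ≤ i) :
    invCol μ N l (i + 1) = -bwdRatio μ N (i + 1) * invCol μ N l i := by
  simp only [invCol, Ico_eq_empty_of_le h, Ico_eq_empty_of_le (h.trans i.le_succ),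
    prod_Ico_succ_top h]
  ring

lemma invCol_eq_zero (hl : l < N) : invCol μ N l N = 0 := by
  obtain ⟨i, rfl⟩ : ∃ i, N = i + 1 := ⟨N - 1, by omega⟩
  rw [invCol_succ_of_le (by omega), bwdRatio_of_le le_rfl, neg_zero, zero_mul]

lemma invCol_pred {i : ℕ} (h : i ≤ l) :
    (if i = 0 then 0 else μ * invCol μ N l (i - 1)) = μ * fwdRatio μ i * invCol μ N l i := by
  rcases i with _ | i
  · simp [fwdRatio]
  · rw [if_neg i.succ_ne_zero, Nat.add_sub_cancel, invCol_of_lt (by omega), mul_assoc]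

lemma invCol_recurrence (hμ : 0 ≤ μ) {i : ℕ} (hi : i < N) :
    (if i = 0 then 0 else μ * invCol μ N l (i - 1)) + Tdiag i * invCol μ N l i
      - μ * invCol μ N l (i + 1) = if i = l then 1 else 0 := by
  rcases lt_trichotomy i l with h | rfl | h
  · rw [invCol_pred h.le, invCol_of_lt h, if_neg h.ne]
    linear_combination invCol μ N l (i + 1) * fwdRatio_succ_mul hμ i
  · rw [invCol_pred le_rfl, invCol_succ_of_le le_rfl, invCol_self, if_pos rfl]
    have hden : 0 < Tdiag i + μ * fwdRatio μ i + μ * bwdRatio μ N (i + 1) :=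
      inv_pos.1 (pivot_pos hμ i)
    unfold pivot
    linear_combination inv_mul_cancel₀ hden.ne'
  · obtain ⟨i, rfl⟩ : ∃ j, i = j + 1 := ⟨i - 1, by omega⟩
    rw [if_neg i.succ_ne_zero, Nat.add_sub_cancel, invCol_succ_of_le (i := i + 1) (by omega),
      invCol_succ_of_le (i := i) (by omega), if_neg h.ne']
    linear_combination -invCol μ N l i * bwdRatio_mul hμ hi

end Column

section Inverse

variable {μ : ℝ} {N : ℕ}

lemma Tmat_apply_mul (i j : Fin N) (x : ℝ) :
    Tmat N μ i j * x = (if (j : ℕ) = i then Tdiag i * x else 0)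
      + (if (j : ℕ) + 1 = i then μ * x else 0) - (if (j : ℕ) = i + 1 then μ * x else 0) := by
  simp only [Tmat, Tdiag, Matrix.of_apply]
  split_ifs <;> first | omega | ring

lemma sum_Tmat_mul (f : ℕ → ℝ) (hf : f N = 0) (i : Fin N) :
    ∑ j : Fin N, Tmat N μ i j * f j
      = (if (i : ℕ) = 0 then 0 else μ * f (i - 1)) + Tdiag i * f i - μ * f (i + 1) := by
  have hsub : ∑ j ∈ range N, (if j + 1 = i then μ * f j else 0)
      = if (i : ℕ) = 0 then 0 else μ * f (i - 1) := by
    rcases i with ⟨_ | i, hi⟩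
    · simp
    · simp [sum_ite_eq', show i < N by omega]
  have hsuper : (if (i : ℕ) + 1 ∈ range N then μ * f (i + 1) else 0) = μ * f (i + 1) := by
    rcases (Nat.succ_le_of_lt i.2).lt_or_eq with h | h
    · simp [h]
    · rw [if_neg (by simp [← h]), ← Nat.succ_eq_add_one, h, hf, mul_zero]
  simp only [Tmat_apply_mul]
  rw [Fin.sum_univ_eq_sum_range (fun j => (if j = i then Tdiag i * f j else 0)
      + (if j + 1 = i then μ * f j else 0) - (if j = i + 1 then μ * f j else 0)),
    sum_sub_distrib, sum_add_distrib, sum_ite_eq', sum_ite_eq', if_pos (mem_range.2 i.2), hsub,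
    hsuper]
  ring

lemma Tmat_mul_Tinv (hμ : 0 ≤ μ) : Tmat N μ * Tinv N μ = 1 := by
  ext i l
  rw [Matrix.mul_apply, Matrix.one_apply]
  simp only [Tinv, Matrix.of_apply]
  rw [sum_Tmat_mul (invCol μ N l) (invCol_eq_zero l.2), invCol_recurrence hμ i.2]
  simp [Fin.ext_iff]

lemma inv_Tmat (hμ : 0 ≤ μ) : (Tmat N μ)⁻¹ = Tinv N μ :=
  Matrix.inv_eq_right_inv (Tmat_mul_Tinv hμ)

end Inverse

lemma Tmat_apply_swap {N : ℕ} {μ : ℝ} (i j : Fin N) :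
    Tmat N μ j i = (-1) ^ (i : ℕ) * (-1) ^ (j : ℕ) * Tmat N μ i j := by
  rw [← pow_add]
  simp only [Tmat, Matrix.of_apply]
  split_ifs <;> first
    | omega
    | (rw [Even.neg_one_pow ⟨(i : ℕ), by omega⟩]; simp_all)
    | (rw [Odd.neg_one_pow ⟨(j : ℕ), by omega⟩]; ring)
    | (rw [Odd.neg_one_pow ⟨(i : ℕ), by omega⟩]; ring)
    | ring

lemma abs_invCol_comm {μ : ℝ} {N : ℕ} (hμ : 0 ≤ μ) (i l : Fin N) :
    |invCol μ N l i| = |invCol μ N i l| := by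
  have := Matrix.abs_inv_apply_comm (Tmat N μ) (fun i => (-1) ^ (i : ℕ))
    (fun i => by simp [← mul_pow]) Tmat_apply_swap i l
  simpa [inv_Tmat hμ, Tinv] using this

section ColumnBounds

variable {μ : ℝ} {N l : ℕ}

lemma abs_invCol_le_add_two (hμ : 0 < μ) {i : ℕ} (h : i + 2 ≤ l) :
    |invCol μ N l i| ≤ |invCol μ N l (i + 2)| := by
  rw [invCol_of_lt (by omega : i < l), invCol_of_lt (by omega : i + 1 < l), ← mul_assoc, abs_mul,
    abs_of_nonneg (mul_nonneg (fwdRatio_nonneg hμ.le _) (fwdRatio_nonneg hμ.le _))]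
  exact mul_le_of_le_one_left (abs_nonneg _) (fwdRatio_mul_fwdRatio_succ_le_one hμ (i + 1))

lemma abs_invCol_le_self (hμ : 0 < μ) :
    ∀ (g i : ℕ), fwdRatio μ (i + g) ≤ 1 →
      |invCol μ N (i + g) i| ≤ |invCol μ N (i + g) (i + g)|
  | 0, _, _ => le_rfl
  | 1, i, h => by
    rw [invCol_of_lt (by omega), abs_mul, abs_of_nonneg (fwdRatio_nonneg hμ.le _)]
    exact mul_le_of_le_one_left (abs_nonneg _) h
  | g + 2, i, h => by
    have := abs_invCol_le_self hμ g (i + 2) (by rwa [add_right_comm, add_assoc])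
    rw [add_right_comm, add_assoc] at this
    exact (abs_invCol_le_add_two hμ (by omega)).trans this

lemma one_sub_mul_sum_abs_invCol_below_le (hμ : 0 ≤ μ) {m : ℕ} {q : ℝ} (hm : l ≤ m)
    (hq : μ / Tdiag (m + 1) ≤ q) :
    (1 - q) * ∑ i ∈ Ico m N, |invCol μ N l i| ≤ |invCol μ N l m| := by
  rcases le_or_gt m N with hmN | hNm
  · refine one_sub_mul_sum_Ico_le_of_succ_le hmN (fun i hi => ?_) (abs_nonneg _)
    have hi := (mem_Ico.1 hi).1
    rw [invCol_succ_of_le (hm.trans hi), abs_mul, abs_neg, abs_of_nonneg (bwdRatio_nonneg hμ _)]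
    gcongr
    calc bwdRatio μ N (i + 1) ≤ μ / Tdiag (i + 1) := bwdRatio_le hμ _
      _ ≤ μ / Tdiag (m + 1) :=
        div_le_div_of_nonneg_left hμ (Tdiag_pos _) (Tdiag_mono (by omega))
      _ ≤ q := hq
  · simp [Ico_eq_empty_of_le hNm.le]

lemma one_sub_mul_sum_abs_invCol_above_le (hμ : 0 ≤ μ) {m : ℕ} {q : ℝ} (hm : m ≤ l)
    (hq : μ / Tdiag m ≤ q) :
    (1 - q) * ∑ i ∈ Ico m l, |invCol μ N l i| ≤ q * |invCol μ N l l| := by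
  refine one_sub_mul_sum_Ico_le_of_le_succ ((div_nonneg hμ (Tdiag_pos m).le).trans hq) hm
    (fun i hi => ?_) (abs_nonneg _)
  obtain ⟨hmi, hil⟩ := mem_Ico.1 hi
  rw [invCol_of_lt hil, abs_mul, abs_of_nonneg (fwdRatio_nonneg hμ _)]
  gcongr
  calc fwdRatio μ (i + 1) ≤ μ / Tdiag i := fwdRatio_succ_le hμ _
    _ ≤ μ / Tdiag m := div_le_div_of_nonneg_left hμ (Tdiag_pos _) (Tdiag_mono hmi)
    _ ≤ q := hq

end ColumnBounds

lemma sum_abs_invCol_Ico_lt {μ : ℝ} {N k : ℕ} (hμ : 0 < μ) (hk : 2 ≤ k)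
    (hμk : 2 * μ < k + 2) (l : Fin N) : ∑ i ∈ Ico k N, |invCol μ N l i| < 1 / (2 * μ) := by
  have hTdiag : ∀ m, Tdiag m = 2 * ((m : ℝ) + 1) := fun _ => rfl
  have hk' : (2 : ℝ) ≤ k := by exact_mod_cast hk
  have hq : ∀ m, k ≤ m → μ / Tdiag (m + 1) ≤ 1 / 4 := fun m hm => by
    have : (k : ℝ) ≤ m := by exact_mod_cast hm
    rw [div_le_div_iff₀ (Tdiag_pos _) (by norm_num), hTdiag]; push_cast; linarith
  rw [lt_div_iff₀ (by positivity)]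
  rcases le_or_gt (l : ℕ) k with hlk | hkl
  · rcases lt_or_ge k N with hkN | hNk
    · have hS := one_sub_mul_sum_abs_invCol_below_le (N := N) hμ.le hlk (hq k le_rfl)
      have hs : fwdRatio μ k ≤ 1 := by
        obtain ⟨j, rfl⟩ : ∃ j, k = j + 1 := ⟨k - 1, by omega⟩
        refine (fwdRatio_succ_le hμ.le j).trans ((div_le_one (Tdiag_pos j)).2 ?_)
        rw [hTdiag]; push_cast at hμk hk' ⊢; linarith
      have hsym : |invCol μ N l k| ≤ pivot μ N k := by
        have h := abs_invCol_le_self (N := N) hμ (k - l) l (by rwa [Nat.add_sub_cancel' hlk])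
        rw [Nat.add_sub_cancel' hlk, invCol_self, abs_of_pos (pivot_pos hμ.le _)] at h
        rwa [abs_invCol_comm hμ.le ⟨k, hkN⟩ l]
      have hp := pivot_mul_Tdiag_le_one (N := N) hμ.le k
      have hp0 := pivot_pos (N := N) hμ.le k
      rw [hTdiag] at hp
      nlinarith [mul_lt_mul_of_pos_left hμk hp0]
    · simp [Ico_eq_empty_of_le hNk]
  · have hS₁ := one_sub_mul_sum_abs_invCol_above_le (N := N) hμ.le hkl.le (q := 1 / 3) (by
      rw [div_le_div_iff₀ (Tdiag_pos _) (by norm_num), hTdiag]; linarith)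
    have hS₂ := one_sub_mul_sum_abs_invCol_below_le (N := N) hμ.le le_rfl (hq l hkl.le)
    rw [invCol_self, abs_of_pos (pivot_pos hμ.le _)] at hS₁ hS₂
    have hp := pivot_mul_Tdiag_le_one (N := N) hμ.le l
    have hp0 := pivot_pos (N := N) hμ.le l
    have hl : (k : ℝ) + 1 ≤ l := by exact_mod_cast hkl
    rw [hTdiag] at hp
    rw [← sum_Ico_consecutive _ hkl.le l.2.le]
    nlinarith [mul_lt_mul_of_pos_left hμk hp0, mul_le_mul_of_nonneg_left hl hp0.le]

/-- `‖T_N(μ)⁻¹‖₁ < ‖(T_N(μ)⁻¹)_{rows 1:2⌊μ⌋}‖₁ + 1/(2μ)` for all even `N > 2μ`. -/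
theorem stmt9 (μ : ℝ) (hμ : 1 ≤ μ) (N : ℕ) (hN : 2 * μ < (N : ℝ)) :
    mat1norm ((Tmat N μ)⁻¹) <
      mat1norm (((Tmat N μ)⁻¹).submatrix
        (Fin.castLE (show 2 * ⌊μ⌋₊ ≤ N by
          have h1 : (⌊μ⌋₊ : ℝ) ≤ μ := Nat.floor_le (by linarith)
          have h2 : ((2 * ⌊μ⌋₊ : ℕ) : ℝ) < (N : ℝ) := by push_cast; linarith
          exact_mod_cast h2.le)) id) + 1 / (2 * μ) := by
  have hμ0 : 0 < μ := by linarith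
  have hn : 1 ≤ ⌊μ⌋₊ := Nat.le_floor (by exact_mod_cast hμ)
  have hnN : 2 * ⌊μ⌋₊ ≤ N := by
    have : ((2 * ⌊μ⌋₊ : ℕ) : ℝ) < N := by push_cast; linarith [Nat.floor_le hμ0.le]
    exact_mod_cast this.le
  have : NeZero N := ⟨by omega⟩
  rw [inv_Tmat hμ0.le]
  refine mat1norm_lt_add fun l => ?_
  simp only [Tinv, Matrix.submatrix_apply, Matrix.of_apply, Fin.val_castLE, id]
  rw [Fin.sum_univ_eq_sum_range (fun i => |invCol μ N l i|),
    Fin.sum_univ_eq_sum_range (fun i => |invCol μ N l i|), ← sum_range_add_sum_Ico _ hnN]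
  refine add_lt_add_right (sum_abs_invCol_Ico_lt (k := 2 * ⌊μ⌋₊) hμ0 (by omega) ?_ l) _
  push_cast
  linarith [Nat.lt_floor_add_one μ]
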